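/- arXiv:math/0302150 — 3 statements merged into one kernel-verified Lean document; each statement's English description precedes it below -/
import Mathlib

section
/- Let k ≥ 1 be a natural number and q ∈ ℂ[X], and set Q = S'^k ∘ q(D). If Q commutes with the Szegő projector Π, then q vanishes at the integers 0, 1, …, k−1; consequently there exists r ∈ ℂ[X] with q(X) = r(X)·∏_{j=0}^{k−1}(X−j), and Q = (S'∘D)^k ∘ r(D). -/
open Polynomial

local notation "V" => (ℤ →₀ ℂ)

/-- The operator `(1/i) d/dθ`: `D δ_m = m • δ_m`. -/
noncomputable def D : Module.End ℂ V :=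
  Finsupp.lsum ℂ fun m => (m : ℂ) • Finsupp.lsingle m

/-- Multiplication by `e^{-iθ}`, the down-shift: `S' δ_m = δ_{m-1}`. -/
noncomputable def S' : Module.End ℂ V :=
  Finsupp.lsum ℂ fun m => Finsupp.lsingle (m - 1)

/-- The Szegő projector: `Π δ_m = δ_m` for `m ≥ 0`, `Π δ_m = 0` for `m < 0`. -/
noncomputable def Szego : Module.End ℂ V :=
  Finsupp.lsum ℂ fun m => if 0 ≤ m then Finsupp.lsingle m else 0

lemma D_single (m : ℤ) (c : ℂ) : D (Finsupp.single m c) = (m : ℂ) • Finsupp.single m c := by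
  simp only [D, Finsupp.lsum_single, LinearMap.smul_apply, Finsupp.lsingle_apply]

lemma S'_single (m : ℤ) (c : ℂ) : S' (Finsupp.single m c) = Finsupp.single (m - 1) c := by
  simp only [S', Finsupp.lsum_single, Finsupp.lsingle_apply]

lemma Szego_single (m : ℤ) (c : ℂ) :
    Szego (Finsupp.single m c) = if 0 ≤ m then Finsupp.single m c else 0 := by
  simp only [Szego, Finsupp.lsum_single]
  split <;> simp_all [Finsupp.lsingle_apply]

lemma S'_pow_single (k : ℕ) (m : ℤ) (c : ℂ) :
    (S' ^ k) (Finsupp.single m c) = Finsupp.single (m - k) c := by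
  induction k with
  | zero => simp
  | succ n ih =>
    rw [pow_succ', Module.End.mul_apply, ih, S'_single]
    congr 1
    push_cast
    ring

lemma D_pow_single (n : ℕ) (m : ℤ) (c : ℂ) :
    (D ^ n) (Finsupp.single m c) = ((m : ℂ) ^ n) • Finsupp.single m c := by
  induction n with
  | zero => simp
  | succ n ih =>
    rw [pow_succ', Module.End.mul_apply, ih, map_smul, D_single, smul_smul]
    ring_nf

lemma aeval_D_single (q : ℂ[X]) (m : ℤ) (c : ℂ) :
    (Polynomial.aeval D q) (Finsupp.single m c) = q.eval (m : ℂ) • Finsupp.single m c := by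
  induction q using Polynomial.induction_on' with
  | add p r hp hr =>
    simp only [map_add, LinearMap.add_apply, hp, hr, eval_add, add_smul]
  | monomial n a =>
    rw [aeval_monomial, Module.End.mul_apply, D_pow_single, map_smul,
      Module.algebraMap_end_apply, eval_monomial, smul_smul, mul_comm]

lemma SD_pow_single (k : ℕ) (m : ℤ) (c : ℂ) :
    ((S' * D) ^ k) (Finsupp.single m c) =
      (∏ j ∈ Finset.range k, ((m : ℂ) - j)) • Finsupp.single (m - k) c := by
  induction k with
  | zero => simp
  | succ n ih =>
    rw [pow_succ', Module.End.mul_apply, ih, map_smul, Module.End.mul_apply, D_single,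
      map_smul, S'_single, smul_smul, Finset.prod_range_succ]
    congr 1
    · push_cast; ring
    · congr 1; push_cast; ring

/-- If `Q = S'^k ∘ q(D)` commutes with the Szegő projector `Π`, then `q` vanishes at
`0, 1, …, k-1`, so `q = r·∏_{j=0}^{k-1} (X-j)` and `Q = (S'∘D)^k ∘ r(D)`. -/
theorem statement2 (k : ℕ) (hk : 1 ≤ k) (q : ℂ[X])
    (hcomm : Commute (S' ^ k * Polynomial.aeval D q) Szego) :
    (∀ j ∈ Finset.range k, q.eval (j : ℂ) = 0) ∧
    ∃ r : ℂ[X], q = r * ∏ j ∈ Finset.range k, (X - C (j : ℂ)) ∧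
      S' ^ k * Polynomial.aeval D q = (S' * D) ^ k * Polynomial.aeval D r := by
  have hroots : ∀ j ∈ Finset.range k, q.eval (j : ℂ) = 0 := by
    intro j hj
    rw [Finset.mem_range] at hj
    have h := DFunLike.congr_fun hcomm.eq (Finsupp.single (j : ℤ) 1)
    rw [Module.End.mul_apply, Module.End.mul_apply, Szego_single, if_pos (by positivity),
      Module.End.mul_apply, Module.End.mul_apply, aeval_D_single, map_smul, S'_pow_single,
      map_smul, Szego_single, if_neg (by omega)] at h
    simp only [smul_zero, Int.cast_natCast] at h
    have h2 := DFunLike.congr_fun h ((j : ℤ) - k)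
    simpa [Finsupp.single_eq_same] using h2
  refine ⟨hroots, ?_⟩
  have hdvd : (∏ j ∈ Finset.range k, (X - C ((j : ℕ) : ℂ))) ∣ q := by
    apply Finset.prod_dvd_of_coprime
    · intro i hi j hj hij
      exact Polynomial.pairwise_coprime_X_sub_C (Nat.cast_injective) hij
    · intro i hi
      rw [Polynomial.dvd_iff_isRoot]
      exact hroots i hi
  obtain ⟨r, hr⟩ := hdvd
  refine ⟨r, by rw [hr, mul_comm], ?_⟩
  apply Finsupp.lhom_ext
  intro m c
  rw [Module.End.mul_apply, Module.End.mul_apply, aeval_D_single, aeval_D_single,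
    map_smul, map_smul, S'_pow_single, SD_pow_single, smul_smul]
  congr 1
  rw [hr]
  simp [eval_prod, mul_comm]
end

section
/- Let f : ℂ → ℂ be infinitely differentiable (ContDiff ℝ ⊤) and suppose f vanishes to infinite order at 0, i.e. iteratedFDeriv ℝ n f 0 = 0 for every n. Then the function F : ℝ × ℝ → ℂ defined by F(s, θ) = f(exp(−iθ)·√s) for s ≥ 0 and F(s, θ) = 0 for s < 0 is infinitely differentiable on ℝ × ℝ. -/
/-!
Put `G(x, θ) = f(e^{-iθ} x)`. It is smooth on `ℝ²` and, by Faà di Bruno, all its derivatives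
vanish on the axis `x = 0`; the function to be studied is `G(√s, θ)` for `s > 0`, extended by `0`.
For every such flat `G` and every `m` consider `H_m G = sqrtPullback G m`, equal to `s⁻ᵐ G(√s, θ)`
for `s > 0` and to `0` for `s ≤ 0`.
Flatness gives `G = O(xᴺ)` near the axis for all `N`, hence `H_m G = O(s²)`, so `H_m G` is
differentiable with derivative `0` on `s = 0`. For `s > 0` the chain rule gives
`∂ₛ H_m G = H_{m+1} ((½ x ∂ₓ - m) G)` and `∂_θ H_m G = H_m (∂_θ G)`, weighted pullbacks of flat
functions again. An induction on the order of differentiability, over all flat `G` and all `m`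
at once, shows that every `H_m G` is smooth.
-/

open Filter Topology Asymptotics ContinuousLinearMap
open scoped ContDiff

section

variable {𝕜 E F H : Type*} [NontriviallyNormedField 𝕜] [NormedAddCommGroup E] [NormedSpace 𝕜 E]
  [NormedAddCommGroup F] [NormedSpace 𝕜 F] [NormedAddCommGroup H] [NormedSpace 𝕜 H]

theorem iteratedFDeriv_comp_eq_zero {g : F → H} {u : E → F} {x : E} {n : ℕ}
    (hg : ContDiffAt 𝕜 n g (u x)) (hu : ContDiffAt 𝕜 n u x)
    (hflat : ∀ i ≤ n, iteratedFDeriv 𝕜 i g (u x) = 0) :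
    iteratedFDeriv 𝕜 n (g ∘ u) x = 0 := by
  rw [iteratedFDeriv_comp hg hu le_rfl]
  refine Finset.sum_eq_zero fun c _ => ?_
  ext v
  simp [ftaylorSeries, hflat c.length c.length_le]

end

section

variable {E : Type*} [NormedAddCommGroup E] [NormedSpace ℝ E]

structure FlatOnAxis (G : ℝ × ℝ → E) : Prop where
  contDiff : ContDiff ℝ (⊤ : ℕ∞) G
  iteratedFDeriv_eq_zero : ∀ (n : ℕ) (θ : ℝ), iteratedFDeriv ℝ n G (0, θ) = 0

theorem abs_fst_le_of_mem_segment {q z : ℝ × ℝ} (hz : z ∈ segment ℝ (0, q.2) q) :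
    |z.1| ≤ |q.1| := by
  obtain ⟨a, b, ha, hb, hab, rfl⟩ := hz
  simp only [Prod.fst_add, Prod.smul_fst, smul_eq_mul, mul_zero, zero_add, abs_mul,
    abs_of_nonneg hb]
  exact mul_le_of_le_one_left (abs_nonneg _) (by linarith)

namespace FlatOnAxis

variable {G G' : ℝ × ℝ → E}

theorem smul {c : ℝ × ℝ → ℝ} (hc : ContDiff ℝ (⊤ : ℕ∞) c) (hG : FlatOnAxis G) :
    FlatOnAxis fun p => c p • G p := by
  refine ⟨hc.smul hG.contDiff, fun n θ => norm_le_zero_iff.1 ?_⟩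
  refine (norm_iteratedFDeriv_smul_le hc hG.contDiff _ (mod_cast le_top)).trans_eq ?_
  simp [hG.iteratedFDeriv_eq_zero]

theorem sub (hG : FlatOnAxis G) (hG' : FlatOnAxis G') : FlatOnAxis fun p => G p - G' p := by
  refine ⟨hG.contDiff.sub hG'.contDiff, fun n θ => ?_⟩
  change iteratedFDeriv ℝ n (G - G') (0, θ) = 0
  rw [iteratedFDeriv_sub_apply (hG.contDiff.of_le (mod_cast le_top)).contDiffAt
    (hG'.contDiff.of_le (mod_cast le_top)).contDiffAt, hG.iteratedFDeriv_eq_zero,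
    hG'.iteratedFDeriv_eq_zero, sub_zero]

theorem fderiv_apply (hG : FlatOnAxis G) (v : ℝ × ℝ) : FlatOnAxis fun p => fderiv ℝ G p v := by
  have hD : ContDiff ℝ (⊤ : ℕ∞) (fderiv ℝ G) := hG.contDiff.fderiv_right (mod_cast le_top)
  refine ⟨hD.clm_apply contDiff_const, fun n θ => ?_⟩
  have h : iteratedFDeriv ℝ n (fderiv ℝ G) (0, θ) = 0 := by
    rw [← norm_eq_zero, norm_iteratedFDeriv_fderiv, hG.iteratedFDeriv_eq_zero, norm_zero]
  rw [show (fun p => fderiv ℝ G p v) = apply ℝ E v ∘ fderiv ℝ G from rfl,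
    (apply ℝ E v).iteratedFDeriv_comp_left hD.contDiffAt (mod_cast le_top), h]
  ext
  simp

theorem isBigO_iteratedFDeriv (hG : FlatOnAxis G) (N k : ℕ) (θ₀ : ℝ) :
    iteratedFDeriv ℝ k G =O[𝓝 (0, θ₀)] fun q => q.1 ^ N := by
  induction N generalizing k with
  | zero =>
    simpa using ((hG.contDiff.continuous_iteratedFDeriv (mod_cast le_top)).tendsto _).isBigO_one ℝ
  | succ N ih =>
    obtain ⟨C, hC₀, hC⟩ := (ih (k + 1)).exists_nonneg
    obtain ⟨r, hr, hball⟩ := Metric.eventually_nhds_iff_ball.1 hC.bound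
    refine IsBigO.of_bound C ?_
    filter_upwards [Metric.ball_mem_nhds _ hr] with q hq
    have hq₀ : ((0 : ℝ), q.2) ∈ Metric.ball ((0 : ℝ), θ₀) r := by
      rw [Metric.mem_ball] at hq ⊢
      refine lt_of_le_of_lt ?_ hq
      simp [Prod.dist_eq]
    have hderiv : ∀ z ∈ segment ℝ (0, q.2) q,
        ‖fderiv ℝ (iteratedFDeriv ℝ k G) z‖ ≤ C * |q.1| ^ N := by
      intro z hz
      rw [norm_fderiv_iteratedFDeriv]
      refine (hball z ((convex_ball _ _).segment_subset hq₀ hq hz)).trans ?_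
      rw [norm_pow, Real.norm_eq_abs]
      exact mul_le_mul_of_nonneg_left
        (pow_le_pow_left₀ (abs_nonneg _) (abs_fst_le_of_mem_segment hz) N) hC₀
    have hmvt := (convex_segment _ _).norm_image_sub_le_of_norm_fderiv_le
      (fun z _ => (hG.contDiff.differentiable_iteratedFDeriv (mod_cast WithTop.coe_lt_top _)) z)
      hderiv (left_mem_segment ℝ _ _) (right_mem_segment ℝ _ _)
    rw [hG.iteratedFDeriv_eq_zero, sub_zero] at hmvt
    have hdist : ‖q - (0, q.2)‖ = |q.1| := by simp [Prod.norm_def]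
    rw [hdist] at hmvt
    simpa [pow_succ, mul_assoc] using hmvt

end FlatOnAxis

noncomputable def sqrtPullback (G : ℝ × ℝ → E) (m : ℕ) (p : ℝ × ℝ) : E :=
  if 0 < p.1 then (p.1 ^ m)⁻¹ • G (√p.1, p.2) else 0

/-- `(½ x ∂ₓ - m) G`: by the chain rule, `∂ₛ (s⁻ᵐ G(√s, θ)) = s⁻⁽ᵐ⁺¹⁾ (radialDeriv G m)(√s, θ)`. -/
noncomputable def radialDeriv (G : ℝ × ℝ → E) (m : ℕ) (p : ℝ × ℝ) : E :=
  (2⁻¹ * p.1) • fderiv ℝ G p (1, 0) - (m : ℝ) • G p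

variable {G : ℝ × ℝ → E} {m : ℕ} {p : ℝ × ℝ}

theorem sqrtPullback_of_pos (hp : 0 < p.1) : sqrtPullback G m p = (p.1 ^ m)⁻¹ • G (√p.1, p.2) :=
  if_pos hp

theorem sqrtPullback_of_nonpos (hp : p.1 ≤ 0) : sqrtPullback G m p = 0 :=
  if_neg hp.not_gt

theorem FlatOnAxis.isBigO_sqrtPullback (hG : FlatOnAxis G) (m N : ℕ) (θ₀ : ℝ) :
    sqrtPullback G m =O[𝓝 (0, θ₀)] fun q => q.1 ^ N := by
  have hGO : G =O[𝓝 (0, θ₀)] fun q => q.1 ^ (2 * (m + N)) := by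
    simpa using (hG.isBigO_iteratedFDeriv (2 * (m + N)) 0 θ₀).norm_left
  have hφ : Tendsto (fun q : ℝ × ℝ => (√q.1, q.2)) (𝓝 (0, θ₀)) (𝓝 (0, θ₀)) := by
    simpa using ((continuous_fst.sqrt.prodMk continuous_snd).tendsto ((0 : ℝ), θ₀))
  obtain ⟨C, hC₀, hC⟩ := (hGO.comp_tendsto hφ).exists_nonneg
  refine IsBigO.of_bound C ?_
  filter_upwards [hC.bound] with q hq
  rcases le_or_gt q.1 0 with hq₁ | hq₁
  · rw [sqrtPullback_of_nonpos hq₁, norm_zero]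
    positivity
  · have hsq : √q.1 ^ (2 * (m + N)) = q.1 ^ m * q.1 ^ N := by
      rw [pow_mul, Real.sq_sqrt hq₁.le, pow_add]
    simp only [Function.comp_apply, hsq] at hq
    rw [sqrtPullback_of_pos hq₁, norm_smul, norm_inv, norm_pow, Real.norm_eq_abs,
      abs_of_pos hq₁, inv_mul_le_iff₀ (by positivity)]
    calc ‖G (√q.1, q.2)‖ ≤ C * ‖q.1 ^ m * q.1 ^ N‖ := hq
      _ = q.1 ^ m * (C * ‖q.1 ^ N‖) := by
        rw [norm_mul, Real.norm_of_nonneg (by positivity : 0 ≤ q.1 ^ m)]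
        ring

theorem hasDerivAt_inv_pow (m : ℕ) {s : ℝ} (hs : s ≠ 0) :
    HasDerivAt (fun s : ℝ => (s ^ m)⁻¹) (-m * (s ^ (m + 1))⁻¹) s := by
  have h := hasDerivAt_zpow (-m) s (Or.inl hs)
  simp only [zpow_neg, zpow_natCast] at h
  refine h.congr_deriv ?_
  rw [show -(m : ℤ) - 1 = -((m + 1 : ℕ) : ℤ) by push_cast; ring, zpow_neg, zpow_natCast]
  push_cast
  ring

theorem hasFDerivAt_sqrtPullback_of_pos (hG : DifferentiableAt ℝ G (√p.1, p.2)) (m : ℕ)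
    (hp : 0 < p.1) :
    HasFDerivAt (sqrtPullback G m)
      ((fst ℝ ℝ ℝ).smulRight (sqrtPullback (radialDeriv G m) (m + 1) p) +
        (snd ℝ ℝ ℝ).smulRight (sqrtPullback (fun q => fderiv ℝ G q (0, 1)) m p)) p := by
  have hlocal : sqrtPullback G m =ᶠ[𝓝 p] fun q => (q.1 ^ m)⁻¹ • G (√q.1, q.2) := by
    filter_upwards [(isOpen_lt continuous_const continuous_fst).mem_nhds hp] with q hq
    exact sqrtPullback_of_pos hq
  have hfst := hasFDerivAt_fst (𝕜 := ℝ) (p := p)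
  have hweight := (hasDerivAt_inv_pow m hp.ne').comp_hasFDerivAt p hfst
  have hφ := (hfst.sqrt hp.ne').prodMk (hasFDerivAt_snd (p := p))
  refine ((hweight.smul (hG.hasFDerivAt.comp p hφ)).congr_of_eventuallyEq hlocal).congr_fderiv ?_
  ext
  · simp only [Function.comp_apply, one_div, mul_inv_rev, neg_mul, neg_smul, add_comp, smul_comp,
      add_apply, smul_apply, comp_apply, inl_apply, ContinuousLinearMap.prod_apply, coe_fst',
      smul_eq_mul, mul_one, coe_snd', smulRight_apply, neg_apply, sqrtPullback_of_pos hp,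
      radialDeriv, one_smul, zero_smul, add_zero]
    have hcoef : (p.1 ^ m)⁻¹ * ((√p.1)⁻¹ * 2⁻¹) = (p.1 ^ (m + 1))⁻¹ * (2⁻¹ * √p.1) := by
      rw [inv_eq_one_div √p.1, ← Real.sqrt_div_self', pow_succ, mul_inv]
      ring
    rw [show ((√p.1)⁻¹ * 2⁻¹, (0 : ℝ)) = ((√p.1)⁻¹ * 2⁻¹) • ((1 : ℝ), (0 : ℝ)) by simp,
      map_smul, smul_smul, hcoef]
    module
  · simp [sqrtPullback_of_pos hp]

theorem FlatOnAxis.hasFDerivAt_sqrtPullback_zero (hG : FlatOnAxis G) (m : ℕ) (hp : p.1 = 0) :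
    HasFDerivAt (sqrtPullback G m) (0 : ℝ × ℝ →L[ℝ] E) p := by
  obtain ⟨x, θ⟩ := p
  obtain rfl : x = 0 := hp
  rw [hasFDerivAt_iff_isLittleO]
  simp only [sqrtPullback_of_nonpos (p := ((0 : ℝ), θ)) le_rfl, sub_zero, zero_apply]
  have hfst : (fun q : ℝ × ℝ => q.1 ^ 2) =O[𝓝 (0, θ)] fun q => ‖q - (0, θ)‖ ^ 2 := by
    refine IsBigO.of_bound 1 (Eventually.of_forall fun q => ?_)
    simp only [norm_pow, norm_norm, one_mul]
    gcongr
    simpa using _root_.norm_fst_le (q - ((0 : ℝ), θ))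
  exact ((hG.isBigO_sqrtPullback m 2 θ).trans hfst).trans_isLittleO
    (isLittleO_pow_sub_sub _ one_lt_two)

theorem FlatOnAxis.radialDeriv_flatOnAxis (hG : FlatOnAxis G) (m : ℕ) :
    FlatOnAxis (radialDeriv G m) :=
  ((hG.fderiv_apply (1, 0)).smul (contDiff_const.mul contDiff_fst)).sub
    (hG.smul contDiff_const)

theorem FlatOnAxis.hasFDerivAt_sqrtPullback (hG : FlatOnAxis G) (m : ℕ) (p : ℝ × ℝ) :
    HasFDerivAt (sqrtPullback G m)
      ((fst ℝ ℝ ℝ).smulRight (sqrtPullback (radialDeriv G m) (m + 1) p) +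
        (snd ℝ ℝ ℝ).smulRight (sqrtPullback (fun q => fderiv ℝ G q (0, 1)) m p)) p := by
  rcases lt_trichotomy p.1 0 with hp | hp | hp
  · simp only [sqrtPullback_of_nonpos hp.le, smulRight_zero, add_zero]
    refine (hasFDerivAt_const 0 p).congr_of_eventuallyEq ?_
    filter_upwards [(isOpen_lt continuous_fst continuous_const).mem_nhds hp] with q hq
    exact sqrtPullback_of_nonpos hq.le
  · simpa only [sqrtPullback_of_nonpos hp.le, smulRight_zero, add_zero]
      using hG.hasFDerivAt_sqrtPullback_zero m hp
  · exact hasFDerivAt_sqrtPullback_of_pos (hG.contDiff.differentiable (by simp) _) m hp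

theorem FlatOnAxis.contDiff_sqrtPullback (hG : FlatOnAxis G) (m : ℕ) :
    ContDiff ℝ ∞ (sqrtPullback G m) := by
  rw [contDiff_infty]
  intro n
  induction n generalizing G m with
  | zero =>
    exact contDiff_zero.2 (continuous_iff_continuousAt.2 fun p =>
      (hG.hasFDerivAt_sqrtPullback m p).continuousAt)
  | succ n ih =>
    refine contDiff_succ_iff_hasFDerivAt.2 ⟨_, ?_, hG.hasFDerivAt_sqrtPullback m⟩
    exact (contDiff_const.smulRight (ih (hG.radialDeriv_flatOnAxis m) (m + 1))).add
      (contDiff_const.smulRight (ih (hG.fderiv_apply (0, 1)) m))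

end

/-- If `f : ℂ → ℂ` is smooth and vanishes to infinite order at `0`, then the pullback
`σ* f`, where `σ(s,θ) = e^{-iθ}√s`, extended by `0` to `s < 0`, is smooth on `ℝ × ℝ`. -/
theorem statement8 (f : ℂ → ℂ) (hf : ContDiff ℝ (⊤ : ℕ∞) f)
    (hflat : ∀ n : ℕ, iteratedFDeriv ℝ n f 0 = 0) :
    ContDiff ℝ (⊤ : ℕ∞) (fun p : ℝ × ℝ =>
      if 0 ≤ p.1 then f (Complex.exp (-Complex.I * p.2) * Real.sqrt p.1) else 0) := by
  set u : ℝ × ℝ → ℂ := fun q => Complex.exp (-Complex.I * q.2) * q.1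
  have hu : ContDiff ℝ (⊤ : ℕ∞) u :=
    (contDiff_const.mul (Complex.ofRealCLM.contDiff.comp contDiff_snd)).cexp.mul
      (Complex.ofRealCLM.contDiff.comp contDiff_fst)
  have hG : FlatOnAxis (f ∘ u) := ⟨hf.comp hu, fun n θ =>
    iteratedFDeriv_comp_eq_zero (hf.of_le (mod_cast le_top)).contDiffAt
      (hu.of_le (mod_cast le_top)).contDiffAt fun i _ => by simpa [u] using hflat i⟩
  have hf0 : f 0 = 0 := by simpa using congr($(hflat 0) ![])
  convert hG.contDiff_sqrtPullback 0 using 1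
  funext p
  rcases lt_trichotomy p.1 0 with hp | hp | hp
  · simp [hp.not_ge, sqrtPullback_of_nonpos hp.le]
  · simp [hp, sqrtPullback_of_nonpos hp.le, hf0]
  · simp [hp.le, sqrtPullback_of_pos hp, u]
end

section
/- (Symbol algebra of the commutant, Theorem 2.5.) In the ℂ-algebra of all functions {s : ℝ // 0 ≤ s} × ℝ → ℂ, the subalgebra generated by the three functions (s,θ) ↦ s, (s,θ) ↦ s·exp(iθ) and (s,θ) ↦ s·exp(−iθ) is exactly the set of functions of the form (s,θ) ↦ P(exp(−iθ/2)√s, exp(iθ/2)√s), where P ranges over two-variable complex polynomials satisfying the evenness condition P(−X, −Y) = P(X, Y). (I.e. the pullbacks under σ(s,θ) = e^{−iθ/2}√s of the ℤ₂-invariant polynomials on ℂ form exactly the algebra generated by s, s e^{iθ}, s e^{−iθ}, the symbol algebra of (T*S¹)₊₊.) -/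
open Complex

namespace Statement10Aux

open MvPolynomial

abbrev D := {s : ℝ // 0 ≤ s} × ℝ

noncomputable def σv : Fin 2 → (D → ℂ) :=
  ![fun p => Complex.exp (-Complex.I * p.2 / 2) * (Real.sqrt (p.1 : ℝ) : ℂ),
    fun p => Complex.exp (Complex.I * p.2 / 2) * (Real.sqrt (p.1 : ℝ) : ℂ)]

noncomputable def φ : MvPolynomial (Fin 2) ℂ →ₐ[ℂ] (D → ℂ) := aeval σv

noncomputable def ι : MvPolynomial (Fin 2) ℂ →ₐ[ℂ] MvPolynomial (Fin 2) ℂ :=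
  aeval (fun i : Fin 2 => -X i)

lemma aeval_pi_apply (v : Fin 2 → (D → ℂ)) (P : MvPolynomial (Fin 2) ℂ) (p : D) :
    (aeval v P) p = eval (fun i => (v i) p) P := by
  induction P using MvPolynomial.induction_on with
  | C a => simp [Pi.algebraMap_apply]
  | add f g hf hg => simp [hf, hg]
  | mul_X f i hf => simp [hf]

lemma φ_apply (P : MvPolynomial (Fin 2) ℂ) (p : D) :
    φ P p = eval ![Complex.exp (-Complex.I * p.2 / 2) * (Real.sqrt (p.1 : ℝ) : ℂ),
              Complex.exp (Complex.I * p.2 / 2) * (Real.sqrt (p.1 : ℝ) : ℂ)] P := by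
  rw [φ, aeval_pi_apply]
  have h : (fun i => σv i p) = ![Complex.exp (-Complex.I * p.2 / 2) * (Real.sqrt (p.1 : ℝ) : ℂ),
      Complex.exp (Complex.I * p.2 / 2) * (Real.sqrt (p.1 : ℝ) : ℂ)] := by
    funext i; fin_cases i <;> rfl
  rw [h]

def Sq : Set (MvPolynomial (Fin 2) ℂ) := {X 0 * X 1, X 1 * X 1, X 0 * X 0}

lemma sqrt_sq (p : D) : ((Real.sqrt (p.1 : ℝ) : ℂ)) * (Real.sqrt (p.1 : ℝ) : ℂ) = ((p.1 : ℝ) : ℂ) := by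
  rw [← Complex.ofReal_mul, Real.mul_self_sqrt p.1.2]

lemma φ_X0X1 : φ (X 0 * X 1) = fun p : D => (((p.1 : ℝ) : ℂ)) := by
  funext p
  rw [map_mul]
  simp only [Pi.mul_apply, φ, aeval_X, σv]
  show (Complex.exp (-Complex.I * p.2 / 2) * _) * (Complex.exp (Complex.I * p.2 / 2) * _) = _
  rw [mul_mul_mul_comm, ← Complex.exp_add, sqrt_sq]
  ring_nf
  rw [Complex.exp_zero, one_mul]

lemma φ_X1X1 : φ (X 1 * X 1) =
    fun p : D => ((p.1 : ℝ) : ℂ) * Complex.exp (Complex.I * p.2) := by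
  funext p
  rw [map_mul]
  simp only [Pi.mul_apply, φ, aeval_X, σv]
  show (Complex.exp (Complex.I * p.2 / 2) * _) * (Complex.exp (Complex.I * p.2 / 2) * _) = _
  rw [mul_mul_mul_comm, ← Complex.exp_add, sqrt_sq]
  ring_nf

lemma φ_X0X0 : φ (X 0 * X 0) =
    fun p : D => ((p.1 : ℝ) : ℂ) * Complex.exp (-Complex.I * p.2) := by
  funext p
  rw [map_mul]
  simp only [Pi.mul_apply, φ, aeval_X, σv]
  show (Complex.exp (-Complex.I * p.2 / 2) * _) * (Complex.exp (-Complex.I * p.2 / 2) * _) = _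
  rw [mul_mul_mul_comm, ← Complex.exp_add, sqrt_sq]
  ring_nf

lemma ι_mono (m : Fin 2 →₀ ℕ) (c : ℂ) :
    ι (monomial m c) = C ((-1 : ℂ) ^ (m 0 + m 1)) * monomial m c := by
  rw [ι, aeval_monomial, monomial_eq, Finsupp.prod_fintype _ _ (fun i => pow_zero _),
    Finsupp.prod_fintype _ _ (fun i => pow_zero _), Fin.prod_univ_two, Fin.prod_univ_two]
  simp only [algebraMap_eq, map_pow, map_neg, map_one]
  ring

lemma coeff_ι (P : MvPolynomial (Fin 2) ℂ) (m : Fin 2 →₀ ℕ) :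
    coeff m (ι P) = (-1 : ℂ) ^ (m 0 + m 1) * coeff m P := by
  conv_lhs => rw [← P.support_sum_monomial_coeff, map_sum]
  rw [MvPolynomial.coeff_sum]
  simp only [ι_mono, coeff_C_mul]
  rw [Finset.sum_eq_single m (fun x _ hx => by simp [coeff_monomial, hx])
    (fun hm => by simp [MvPolynomial.notMem_support_iff.mp hm])]
  simp [coeff_monomial]

lemma even_of_ι_fixed {P : MvPolynomial (Fin 2) ℂ} (h : ι P = P) {m : Fin 2 →₀ ℕ}
    (hm : coeff m P ≠ 0) : Even (m 0 + m 1) := by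
  by_contra hodd
  have := coeff_ι P m
  rw [h] at this
  rw [Odd.neg_one_pow (Nat.not_even_iff_odd.mp hodd)] at this
  exact hm (by linear_combination (1/2 : ℂ) * this)

lemma quad_mem : ∀ n a b : ℕ, a + b = n → Even n →
    (X 0 : MvPolynomial (Fin 2) ℂ) ^ a * X 1 ^ b ∈ Algebra.adjoin ℂ Sq := by
  intro n
  induction n using Nat.strong_induction_on with
  | _ n ih =>
    intro a b hab hev
    by_cases ha : 2 ≤ a
    · obtain ⟨a', rfl⟩ : ∃ a', a = a' + 2 := ⟨a - 2, by omega⟩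
      have h1 : (X 0 : MvPolynomial (Fin 2) ℂ) ^ (a' + 2) * X 1 ^ b
          = (X 0 * X 0) * (X 0 ^ a' * X 1 ^ b) := by ring
      rw [h1]
      refine mul_mem (Algebra.subset_adjoin (by simp [Sq])) ?_
      refine ih (a' + b) (by omega) a' b rfl ?_
      subst hab
      simp only [Nat.even_iff] at hev ⊢
      omega
    · by_cases hb : 2 ≤ b
      · obtain ⟨b', rfl⟩ : ∃ b', b = b' + 2 := ⟨b - 2, by omega⟩
        have h1 : (X 0 : MvPolynomial (Fin 2) ℂ) ^ a * X 1 ^ (b' + 2)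
            = (X 1 * X 1) * (X 0 ^ a * X 1 ^ b') := by ring
        rw [h1]
        refine mul_mem (Algebra.subset_adjoin (by simp [Sq])) ?_
        refine ih (a + b') (by omega) a b' rfl ?_
        subst hab
        simp only [Nat.even_iff] at hev ⊢
        omega
      · interval_cases a <;> interval_cases b
        · simpa using one_mem _
        · exfalso; rw [Nat.even_iff] at hev; omega
        · exfalso; rw [Nat.even_iff] at hev; omega
        · simpa using Algebra.subset_adjoin (show (X 0 * X 1 : MvPolynomial (Fin 2) ℂ) ∈ Sq by simp [Sq])

lemma even_mem_adjoin {P : MvPolynomial (Fin 2) ℂ} (h : ι P = P) :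
    P ∈ Algebra.adjoin ℂ Sq := by
  rw [← P.support_sum_monomial_coeff]
  refine Subalgebra.sum_mem _ fun m hm => ?_
  have hev : Even (m 0 + m 1) := even_of_ι_fixed h (MvPolynomial.mem_support_iff.mp hm)
  rw [monomial_eq, Finsupp.prod_fintype _ _ (fun i => pow_zero _), Fin.prod_univ_two]
  exact mul_mem (Subalgebra.algebraMap_mem _ _) (quad_mem _ (m 0) (m 1) rfl hev)

lemma adjoin_Sq_even {P : MvPolynomial (Fin 2) ℂ} (h : P ∈ Algebra.adjoin ℂ Sq) :
    ι P = P := by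
  have : Algebra.adjoin ℂ Sq ≤ AlgHom.equalizer ι (AlgHom.id ℂ _) := by
    rw [Algebra.adjoin_le_iff]
    rintro q hq
    rw [SetLike.mem_coe, AlgHom.mem_equalizer]
    rcases hq with rfl | rfl | rfl <;> simp [ι]
  exact this h

end Statement10Aux

/-- Theorem 2.5 (symbol algebra of the commutant): in the algebra of functions on
`[0,∞) × S¹` (coordinates `(s,θ)` on the orbifold cut space `(T*S¹)₊₊`), the subalgebra
generated by `s`, `s·e^{iθ}`, `s·e^{-iθ}` consists exactly of the pullbacks under
`σ(s,θ) = e^{-iθ/2}√s` of the even (ℤ₂-invariant) polynomials `P(z, z̄)` on `ℂ`. -/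
theorem statement10 :
    (↑(Algebra.adjoin ℂ
        ({fun p : {s : ℝ // 0 ≤ s} × ℝ => (((p.1 : ℝ) : ℂ)),
          fun p : {s : ℝ // 0 ≤ s} × ℝ => ((p.1 : ℝ) : ℂ) * Complex.exp (Complex.I * p.2),
          fun p : {s : ℝ // 0 ≤ s} × ℝ => ((p.1 : ℝ) : ℂ) * Complex.exp (-Complex.I * p.2)} :
          Set ({s : ℝ // 0 ≤ s} × ℝ → ℂ))) : Set ({s : ℝ // 0 ≤ s} × ℝ → ℂ)) =
    {g : {s : ℝ // 0 ≤ s} × ℝ → ℂ | ∃ P : MvPolynomial (Fin 2) ℂ,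
        MvPolynomial.aeval (fun i : Fin 2 => -MvPolynomial.X i) P = P ∧
        g = fun p => MvPolynomial.eval
            ![Complex.exp (-Complex.I * p.2 / 2) * (Real.sqrt (p.1 : ℝ) : ℂ),
              Complex.exp (Complex.I * p.2 / 2) * (Real.sqrt (p.1 : ℝ) : ℂ)] P} := by
  have hadj : Algebra.adjoin ℂ
      ({fun p : {s : ℝ // 0 ≤ s} × ℝ => (((p.1 : ℝ) : ℂ)),
        fun p : {s : ℝ // 0 ≤ s} × ℝ => ((p.1 : ℝ) : ℂ) * Complex.exp (Complex.I * p.2),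
        fun p : {s : ℝ // 0 ≤ s} × ℝ => ((p.1 : ℝ) : ℂ) * Complex.exp (-Complex.I * p.2)} :
        Set ({s : ℝ // 0 ≤ s} × ℝ → ℂ)) =
      (Algebra.adjoin ℂ Statement10Aux.Sq).map Statement10Aux.φ := by
    rw [AlgHom.map_adjoin, Statement10Aux.Sq, Set.image_insert_eq, Set.image_insert_eq,
      Set.image_singleton, Statement10Aux.φ_X0X1, Statement10Aux.φ_X1X1, Statement10Aux.φ_X0X0]
  rw [hadj]
  ext g
  simp only [SetLike.mem_coe, Subalgebra.mem_map, Set.mem_setOf_eq]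
  constructor
  · rintro ⟨P, hP, rfl⟩
    refine ⟨P, Statement10Aux.adjoin_Sq_even hP, ?_⟩
    funext p
    exact Statement10Aux.φ_apply P p
  · rintro ⟨P, hP, rfl⟩
    refine ⟨P, Statement10Aux.even_mem_adjoin hP, ?_⟩
    funext p
    exact Statement10Aux.φ_apply P p
end
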